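/- The extension of the q-Fibonacci polynomials to negative indices (uniquely determined by requiring the recurrence f(n) = x f(n-1) + q^{n-2} s f(n-2) for all integers n) satisfies f(-n,x,s) = (-1)^{n-1} q^{C(n+1,2)} f(n,x,q^{-n}s)/s^n for all n ≥ 1. -/

import Mathlib

/-- Carlitz q-Fibonacci polynomials. -/
def qFib (q x s : ℝ) : ℕ → ℝ
  | 0 => 0
  | 1 => 1
  | (n+2) => x * qFib q x s (n+1) + q^n * s * qFib q x s n

lemma qFib_ss (q x s : ℝ) (n : ℕ) :
    qFib q x s (n+2) = x * qFib q x s (n+1) + q^n * s * qFib q x s n := rfl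

lemma qFib_alt (q x : ℝ) : ∀ (n : ℕ) (s : ℝ),
    qFib q x s (n+2) = x * qFib q x (q*s) (n+1) + q * s * qFib q x (q^2*s) n := by
  intro n
  induction n using Nat.twoStepInduction with
  | zero => intro s; simp [qFib]
  | one => intro s; simp [qFib]
  | more n ih1 ih2 =>
      intro s
      have L : qFib q x s (n+4) = x * qFib q x s (n+3) + q^(n+2)*s*qFib q x s (n+2) :=
        qFib_ss q x s (n+2)
      have A : qFib q x s (n+3) = x * qFib q x (q*s) (n+2) + q*s*qFib q x (q^2*s) (n+1) :=
        ih2 s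
      have B : qFib q x s (n+2) = x * qFib q x (q*s) (n+1) + q*s*qFib q x (q^2*s) n :=
        ih1 s
      have C : qFib q x (q*s) (n+3)
          = x * qFib q x (q*s) (n+2) + q^(n+1)*(q*s)*qFib q x (q*s) (n+1) :=
        qFib_ss q x (q*s) (n+1)
      have D : qFib q x (q^2*s) (n+2)
          = x * qFib q x (q^2*s) (n+1) + q^n*(q^2*s)*qFib q x (q^2*s) n :=
        qFib_ss q x (q^2*s) n
      show qFib q x s (n+4) = x * qFib q x (q*s) (n+3) + q*s*qFib q x (q^2*s) (n+2)
      rw [L, A, B, C, D]; ring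

lemma qFib_shift (q x s : ℝ) (hq : q ≠ 0) (k : ℕ) :
    qFib q x (q^(-(k:ℤ)-2) * s) (k+2)
      = x * qFib q x (q^(-(k:ℤ)-1)*s) (k+1) + q^(-(k:ℤ)-1) * s * qFib q x (q^(-(k:ℤ))*s) k := by
  have h1 : q*(q^(-(k:ℤ)-2)*s) = q^(-(k:ℤ)-1)*s := by
    rw [← mul_assoc, ← zpow_one_add₀ hq]; ring_nf
  have h2 : q^2*(q^(-(k:ℤ)-2)*s) = q^(-(k:ℤ))*s := by
    rw [show (q:ℝ)^2 = q^(2:ℤ) from (zpow_two q).symm ▸ (sq q ▸ rfl), ← mul_assoc,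
      ← zpow_add₀ hq]
    ring_nf
  have h := qFib_alt q x k (q^(-(k:ℤ)-2)*s)
  rw [h1, h2] at h
  exact h

noncomputable def Rv (q x s : ℝ) (m : ℕ) : ℝ :=
  (-1)^(m-1) * q^((m+1).choose 2) * qFib q x (q^(-(m:ℤ)) * s) m / s^m

lemma R_rec (q x s : ℝ) (hq : q ≠ 0) (hs : s ≠ 0) (k : ℕ) :
    Rv q x s (k+1) = x * Rv q x s (k+2) + q^(-(k:ℤ)-3) * s * Rv q x s (k+3) := by
  have ha := qFib_shift q x s hq (k+1)
  have e1 : (q:ℝ)^(-((k+1:ℕ):ℤ)) = q^(-(k:ℤ)-1) := by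
    rw [show -((k+1:ℕ):ℤ) = -(k:ℤ)-1 by push_cast; ring]
  have e2 : (q:ℝ)^(-((k+2:ℕ):ℤ)) = q^(-(k:ℤ)-2) := by
    rw [show -((k+2:ℕ):ℤ) = -(k:ℤ)-2 by push_cast; ring]
  have e3 : (q:ℝ)^(-((k+3:ℕ):ℤ)) = q^(-(k:ℤ)-3) := by
    rw [show -((k+3:ℕ):ℤ) = -(k:ℤ)-3 by push_cast; ring]
  have ha' : qFib q x (q^(-(k:ℤ)-3) * s) (k+3)
      = x * qFib q x (q^(-(k:ℤ)-2)*s) (k+2) + q^(-(k:ℤ)-2) * s * qFib q x (q^(-(k:ℤ)-1)*s) (k+1) := by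
    have h1 : -((k+1:ℕ):ℤ)-2 = -(k:ℤ)-3 := by push_cast; ring
    have h2 : -((k+1:ℕ):ℤ)-1 = -(k:ℤ)-2 := by push_cast; ring
    have h3 : -((k+1:ℕ):ℤ) = -(k:ℤ)-1 := by push_cast; ring
    rw [h1, h2, h3] at ha
    exact ha
  unfold Rv
  simp only [Nat.add_sub_cancel, e1, e2, e3, show k + 2 - 1 = k + 1 by omega, show k + 3 - 1 = k + 2 by omega]
  set a1 := qFib q x (q^(-(k:ℤ)-1)*s) (k+1) with ha1
  set a2 := qFib q x (q^(-(k:ℤ)-2)*s) (k+2) with ha2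
  set a3 := qFib q x (q^(-(k:ℤ)-3)*s) (k+3) with ha3
  have c2 : (k+3).choose 2 = (k+2).choose 2 + (k+2) := by
    rw [Nat.choose_succ_succ, Nat.choose_one_right]
    norm_num
    omega
  have c3 : (k+4).choose 2 = (k+2).choose 2 + (2*k+5) := by
    rw [Nat.choose_succ_succ, Nat.choose_one_right,
      Nat.choose_succ_succ (k+2) 1, Nat.choose_one_right]
    norm_num
    omega
  have z2 : (q:ℝ)^(-(k:ℤ)-2) = (q^(k+2))⁻¹ := by
    rw [show -(k:ℤ)-2 = -((k+2:ℕ):ℤ) by push_cast; ring, zpow_neg, zpow_natCast]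
  have z3 : (q:ℝ)^(-(k:ℤ)-3) = (q^(k+3))⁻¹ := by
    rw [show -(k:ℤ)-3 = -((k+3:ℕ):ℤ) by push_cast; ring, zpow_neg, zpow_natCast]
  rw [ha', c2, c3, z2, z3, pow_add, pow_add]
  have hqp : ∀ m : ℕ, (q:ℝ)^m ≠ 0 := fun m => pow_ne_zero m hq
  field_simp
  ring



/-- Any extension `g : ℤ → ℝ` of the q-Fibonacci sequence satisfying the defining
recurrence for all integers satisfies
`g (-n) = (-1)^(n-1) q^(C(n+1,2)) f(n, x, q^(-n) s) / s^n`. -/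
theorem qFib_negative_index (q x s : ℝ) (hq : q ≠ 0) (hs : s ≠ 0)
    (g : ℤ → ℝ) (hg0 : g 0 = 0) (hg1 : g 1 = 1)
    (hgrec : ∀ n : ℤ, g n = x * g (n-1) + q^(n-2) * s * g (n-2))
    (n : ℕ) (hn : 1 ≤ n) :
    g (-(n : ℤ))
      = (-1)^(n-1) * q^((n+1).choose 2) * qFib q x (q^(-(n:ℤ)) * s) n / s^n := by
  have key : ∀ k : ℕ, g (-(k:ℤ)-1) = Rv q x s (k+1) ∧ g (-(k:ℤ)-2) = Rv q x s (k+2) := by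
    intro k
    induction k with
    | zero =>
      have R1 : Rv q x s 1 = q / s := by unfold Rv; norm_num [qFib]
      have R2 : Rv q x s 2 = -(q^3 * x) / s^2 := by unfold Rv; norm_num [qFib]
      have h1 : g (-1) = q / s := by
        have h := hgrec 1
        norm_num [hg0, hg1] at h
        field_simp at h
        field_simp
        linarith
      have h2 : g (-2) = -(q^3*x) / s^2 := by
        have h := hgrec 0
        norm_num [hg0, h1] at h
        field_simp at h ⊢
        linear_combination -h
      constructor
      · simpa using h1.trans R1.symm
      · simpa using h2.trans R2.symm
    | succ k ih =>
      constructor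
      · rw [show (-((k+1:ℕ):ℤ)-1) = -(k:ℤ)-2 by push_cast; ring]
        exact ih.2
      · rw [show (-((k+1:ℕ):ℤ)-2) = -(k:ℤ)-3 by push_cast; ring]
        have h := hgrec (-(k:ℤ)-1)
        rw [show (-(k:ℤ)-1)-1 = -(k:ℤ)-2 from by ring,
          show (-(k:ℤ)-1)-2 = -(k:ℤ)-3 from by ring, ih.1, ih.2] at h
        have hr := R_rec q x s hq hs k
        have hc : (q:ℝ)^(-(k:ℤ)-3) * s ≠ 0 := mul_ne_zero (zpow_ne_zero _ hq) hs
        have heq : q^(-(k:ℤ)-3) * s * g (-(k:ℤ)-3)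
            = q^(-(k:ℤ)-3) * s * Rv q x s (k+3) := by linear_combination hr - h
        exact mul_left_cancel₀ hc heq
  obtain ⟨m, rfl⟩ : ∃ m, n = m+1 := ⟨n-1, by omega⟩
  have h := (key m).1
  rw [show (-((m+1:ℕ):ℤ)) = -(m:ℤ)-1 by push_cast; ring]
  unfold Rv at h
  convert h using 3 <;> push_cast <;> ring
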